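/- Combining the two bounds: under the setting of Proposition 2, if $\sigma_{\max}(B_S - B_T) \le \epsilon$, then $\sqrt{L(v_{lp}^\infty)} \le \epsilon \|w_\star\|_2 \left(1 + \frac{\sigma_{\max}(B_T)^2 \sigma_{\max}(X)^2}{\sigma_{\min}(X B_T^\top)^2}\right)$. -/

import Mathlib

open Matrix

/-- The largest singular value (operator 2-norm) of a real matrix. -/
noncomputable def sigmaMax {a b : ℕ} (M : Matrix (Fin a) (Fin b) ℝ) : ℝ :=
  ‖LinearMap.toContinuousLinearMap (Matrix.toEuclideanLin M)‖

/-- The smallest singular value of a real matrix: the infimum of `‖M v‖` over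
unit vectors `v`. -/
noncomputable def sigmaMin {a b : ℕ} (M : Matrix (Fin a) (Fin b) ℝ) : ℝ :=
  ⨅ v : {v : EuclideanSpace ℝ (Fin b) // ‖v‖ = 1}, ‖Matrix.toEuclideanLin M v‖

/-!
Put `Σ = XᵀX`, `G = B_T Σ B_Tᵀ` and `P = B_Tᵀ G⁻¹ B_T Σ`. Since `P B_Tᵀ = B_Tᵀ`, the residual
`B_Sᵀ v - B_Tᵀ G⁻¹ B_T Σ B_Sᵀ v` equals `(1 - P) u` with `u = (B_S - B_T)ᵀ v`, so its norm is at
most `(1 + ‖P‖) ε ‖v‖`, and `‖v‖ = ‖w⋆‖` because `B_S` has orthonormal rows. Finally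
`G = (X B_Tᵀ)ᵀ (X B_Tᵀ)` satisfies `‖G y‖ ≥ σ_min(X B_Tᵀ)² ‖y‖`, so
`‖P‖ ≤ σ_max(B_T)² σ_max(X)² / σ_min(X B_Tᵀ)²`.
-/

open scoped Matrix.Norms.L2Operator RealInnerProductSpace

section Projection

variable {R ι κ : Type*} [CommRing R] [Fintype ι] [DecidableEq ι] [Fintype κ]

lemma transpose_mul_inv_mul_mul_transpose (B : Matrix ι κ R) (S : Matrix κ κ R)
    [Invertible (B * S * Bᵀ)] : Bᵀ * (B * S * Bᵀ)⁻¹ * B * S * Bᵀ = Bᵀ :=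
  calc Bᵀ * (B * S * Bᵀ)⁻¹ * B * S * Bᵀ = Bᵀ * ((B * S * Bᵀ)⁻¹ * (B * S * Bᵀ)) := by
        simp only [Matrix.mul_assoc]
    _ = Bᵀ := by rw [inv_mul_of_invertible, Matrix.mul_one]

lemma transpose_sub_transpose_mul_inv_mul_eq (BS BT : Matrix ι κ R) (S : Matrix κ κ R)
    [Invertible (BT * S * BTᵀ)] :
    BSᵀ - BTᵀ * ((BT * S * BTᵀ)⁻¹ * BT * S * BSᵀ) =
      (BS - BT)ᵀ - BTᵀ * (BT * S * BTᵀ)⁻¹ * BT * S * (BS - BT)ᵀ := by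
  rw [transpose_sub, Matrix.mul_sub, transpose_mul_inv_mul_mul_transpose]
  simp only [Matrix.mul_assoc]
  abel

end Projection

section L2OpNorm

variable {ι κ : Type*} [Fintype ι] [Fintype κ] [DecidableEq κ]

lemma norm_toEuclideanLin_le (M : Matrix ι κ ℝ) (v : EuclideanSpace ℝ κ) :
    ‖toEuclideanLin M v‖ ≤ ‖M‖ * ‖v‖ :=
  (LinearMap.toContinuousLinearMap (toEuclideanLin M)).le_opNorm v

lemma l2_opNorm_transpose [DecidableEq ι] (M : Matrix ι κ ℝ) : ‖Mᵀ‖ = ‖M‖ := by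
  rw [← conjTranspose_eq_transpose_of_trivial, l2_opNorm_conjTranspose]

lemma l2_opNorm_transpose_mul_self (M : Matrix ι κ ℝ) : ‖Mᵀ * M‖ = ‖M‖ * ‖M‖ := by
  rw [← conjTranspose_eq_transpose_of_trivial, l2_opNorm_conjTranspose_mul_self]

lemma inner_toEuclideanLin_transpose [DecidableEq ι] (M : Matrix ι κ ℝ) (x : EuclideanSpace ℝ ι)
    (y : EuclideanSpace ℝ κ) : ⟪toEuclideanLin Mᵀ x, y⟫ = ⟪x, toEuclideanLin M y⟫ := by
  rw [← conjTranspose_eq_transpose_of_trivial, toEuclideanLin_conjTranspose_eq_adjoint,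
    LinearMap.adjoint_inner_left]

lemma norm_toEuclideanLin_transpose_of_mul_transpose_eq_one [DecidableEq ι] {B : Matrix ι κ ℝ}
    (hB : B * Bᵀ = 1) (v : EuclideanSpace ℝ ι) : ‖toEuclideanLin Bᵀ v‖ = ‖v‖ := by
  have h : ‖toEuclideanLin Bᵀ v‖ ^ 2 = ‖v‖ ^ 2 := by
    rw [← real_inner_self_eq_norm_sq, ← real_inner_self_eq_norm_sq,
      inner_toEuclideanLin_transpose, ← LinearMap.comp_apply, ← toLpLin_mul_same, hB,
      toLpLin_one, LinearMap.id_apply]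
  exact (pow_left_inj₀ (norm_nonneg _) (norm_nonneg _) two_ne_zero).1 h

end L2OpNorm

section SingularValues

variable {k m n : ℕ}

lemma sigmaMax_eq_l2_opNorm (M : Matrix (Fin m) (Fin n) ℝ) : sigmaMax M = ‖M‖ := rfl

lemma sigmaMin_nonneg (A : Matrix (Fin m) (Fin n) ℝ) : 0 ≤ sigmaMin A :=
  Real.iInf_nonneg fun _ => norm_nonneg _

lemma sigmaMin_mul_norm_le (A : Matrix (Fin m) (Fin n) ℝ) (w : EuclideanSpace ℝ (Fin n)) :
    sigmaMin A * ‖w‖ ≤ ‖toEuclideanLin A w‖ := by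
  rcases eq_or_ne w 0 with rfl | hw
  · simp
  have hw' : 0 < ‖w‖ := norm_pos_iff.2 hw
  have hunit : ‖‖w‖⁻¹ • w‖ = 1 := by
    rw [norm_smul, norm_inv, norm_norm, inv_mul_cancel₀ hw'.ne']
  have hbdd : BddBelow (Set.range fun v : {v : EuclideanSpace ℝ (Fin n) // ‖v‖ = 1} =>
      ‖toEuclideanLin A v‖) := ⟨0, by rintro _ ⟨v, rfl⟩; exact norm_nonneg _⟩
  have h := ciInf_le hbdd ⟨_, hunit⟩
  rw [map_smul, norm_smul, norm_inv, norm_norm] at h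
  rwa [← le_div_iff₀ hw', div_eq_inv_mul]

lemma sigmaMin_sq_mul_norm_le (A : Matrix (Fin m) (Fin n) ℝ) (y : EuclideanSpace ℝ (Fin n)) :
    sigmaMin A ^ 2 * ‖y‖ ≤ ‖toEuclideanLin (Aᵀ * A) y‖ := by
  rcases eq_or_ne y 0 with rfl | hy
  · simp
  have hy' : 0 < ‖y‖ := norm_pos_iff.2 hy
  have h : (sigmaMin A * ‖y‖) ^ 2 ≤ ‖toEuclideanLin (Aᵀ * A) y‖ * ‖y‖ :=
    calc (sigmaMin A * ‖y‖) ^ 2 ≤ ‖toEuclideanLin A y‖ ^ 2 := by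
          gcongr
          · exact mul_nonneg (sigmaMin_nonneg A) hy'.le
          · exact sigmaMin_mul_norm_le A y
      _ = ⟪toEuclideanLin (Aᵀ * A) y, y⟫ := by
          rw [← real_inner_self_eq_norm_sq, toLpLin_mul_same, LinearMap.comp_apply,
            inner_toEuclideanLin_transpose]
      _ ≤ ‖toEuclideanLin (Aᵀ * A) y‖ * ‖y‖ := real_inner_le_norm _ _
  nlinarith

lemma l2_opNorm_inv_transpose_mul_self_le (A : Matrix (Fin m) (Fin n) ℝ)
    [Invertible (Aᵀ * A)] (hA : 0 < sigmaMin A) : ‖(Aᵀ * A)⁻¹‖ ≤ (sigmaMin A ^ 2)⁻¹ := by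
  refine ContinuousLinearMap.opNorm_le_bound _ (by positivity) fun z => ?_
  rw [← div_eq_inv_mul, le_div_iff₀ (by positivity), mul_comm]
  have := sigmaMin_sq_mul_norm_le A (toEuclideanLin (Aᵀ * A)⁻¹ z)
  rwa [← LinearMap.comp_apply, ← toLpLin_mul_same, mul_inv_of_invertible, toLpLin_one,
    LinearMap.id_apply] at this

lemma l2_opNorm_transpose_mul_inv_mul_le (B : Matrix (Fin k) (Fin n) ℝ)
    (X : Matrix (Fin m) (Fin n) ℝ) [Invertible (B * (Xᵀ * X) * Bᵀ)]
    (hXB : 0 < sigmaMin (X * Bᵀ)) :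
    ‖Bᵀ * (B * (Xᵀ * X) * Bᵀ)⁻¹ * B * (Xᵀ * X)‖ ≤
      ‖B‖ ^ 2 * ‖X‖ ^ 2 / sigmaMin (X * Bᵀ) ^ 2 := by
  have hG : B * (Xᵀ * X) * Bᵀ = (X * Bᵀ)ᵀ * (X * Bᵀ) := by
    simp only [transpose_mul, transpose_transpose, Matrix.mul_assoc]
  let _ : Invertible ((X * Bᵀ)ᵀ * (X * Bᵀ)) := Invertible.copy ‹_› _ hG.symm
  have hinv := l2_opNorm_inv_transpose_mul_self_le (X * Bᵀ) hXB
  rw [← hG] at hinv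
  calc ‖Bᵀ * (B * (Xᵀ * X) * Bᵀ)⁻¹ * B * (Xᵀ * X)‖
      ≤ ‖Bᵀ‖ * ‖(B * (Xᵀ * X) * Bᵀ)⁻¹‖ * ‖B‖ * ‖Xᵀ * X‖ := by
        refine (l2_opNorm_mul _ _).trans ?_
        gcongr
        refine (l2_opNorm_mul _ _).trans ?_
        gcongr
        exact l2_opNorm_mul _ _
    _ ≤ ‖B‖ * (sigmaMin (X * Bᵀ) ^ 2)⁻¹ * ‖B‖ * (‖X‖ * ‖X‖) := by
        rw [l2_opNorm_transpose, l2_opNorm_transpose_mul_self]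
        gcongr
    _ = ‖B‖ ^ 2 * ‖X‖ ^ 2 / sigmaMin (X * Bᵀ) ^ 2 := by ring

end SingularValues

/-- Combined bound of Proposition 2: if `σ_max(B_S - B_T) ≤ ε` then the square
root of the fine-tuned linear-probe loss is bounded by
`ε ‖w⋆‖ (1 + σ_max(B_T)² σ_max(X)² / σ_min(X B_Tᵀ)²)`. -/
theorem stmt_11 {k d m : ℕ} (BS BT : Matrix (Fin k) (Fin d) ℝ)
    (X : Matrix (Fin m) (Fin d) ℝ) (vS : EuclideanSpace ℝ (Fin k)) (ε : ℝ)
    (hBS : BS * BSᵀ = 1)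
    [Invertible (BT * (Xᵀ * X) * BTᵀ)]
    (hXBT : 0 < sigmaMin (X * BTᵀ))
    (hshift : sigmaMax (BS - BT) ≤ ε) :
    ‖Matrix.toEuclideanLin BSᵀ vS -
        Matrix.toEuclideanLin BTᵀ
          (Matrix.toEuclideanLin
            ((BT * (Xᵀ * X) * BTᵀ)⁻¹ * BT * (Xᵀ * X) * BSᵀ) vS)‖ ≤
      ε * ‖Matrix.toEuclideanLin BSᵀ vS‖ *
        (1 + sigmaMax BT ^ 2 * sigmaMax X ^ 2 / sigmaMin (X * BTᵀ) ^ 2) := by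
  simp only [sigmaMax_eq_l2_opNorm] at hshift ⊢
  set P := BTᵀ * (BT * (Xᵀ * X) * BTᵀ)⁻¹ * BT * (Xᵀ * X)
  have hP : ‖P‖ ≤ ‖BT‖ ^ 2 * ‖X‖ ^ 2 / sigmaMin (X * BTᵀ) ^ 2 :=
    l2_opNorm_transpose_mul_inv_mul_le BT X hXBT
  have hD : ‖(BS - BT)ᵀ‖ ≤ ε := (l2_opNorm_transpose _).trans_le hshift
  rw [← LinearMap.comp_apply, ← toLpLin_mul_same, ← LinearMap.sub_apply, ← map_sub,
    transpose_sub_transpose_mul_inv_mul_eq,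
    norm_toEuclideanLin_transpose_of_mul_transpose_eq_one hBS]
  calc _ ≤ ‖(BS - BT)ᵀ - P * (BS - BT)ᵀ‖ * ‖vS‖ := norm_toEuclideanLin_le _ _
    _ ≤ (‖(BS - BT)ᵀ‖ + ‖P‖ * ‖(BS - BT)ᵀ‖) * ‖vS‖ := by
        gcongr
        exact (norm_sub_le _ _).trans (add_le_add le_rfl (l2_opNorm_mul _ _))
    _ = ‖(BS - BT)ᵀ‖ * ‖vS‖ * (1 + ‖P‖) := by ring
    _ ≤ ε * ‖vS‖ * (1 + ‖BT‖ ^ 2 * ‖X‖ ^ 2 / sigmaMin (X * BTᵀ) ^ 2) := by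
        gcongr
        exact mul_nonneg ((norm_nonneg _).trans hshift) (norm_nonneg _)
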